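/- arXiv:2403.08906 — 2 statements merged into one kernel-verified Lean document; each statement's English description precedes it below -/
import Mathlib

section
/- The softmax function with temperature τ > 0, mapping q ∈ ℝ^n to σ(q) with σ(q)(i) = exp(q(i)/τ) / Σ_j exp(q(j)/τ), is (1/τ)-Lipschitz with respect to the Euclidean norm: ‖σ(q) - σ(q̄)‖₂ ≤ (1/τ)‖q - q̄‖₂ for all q, q̄ ∈ ℝ^n. -/
/-- Softmax with temperature τ on ℝ^n. -/
noncomputable def softmax {n : ℕ} (τ : ℝ) (q : Fin n → ℝ) (i : Fin n) : ℝ :=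
  Real.exp (q i / τ) / ∑ j, Real.exp (q j / τ)

/-!
Along the segment from `q̄` to `q` the velocity of `σ` is `τ⁻¹ • J v`, where `v = q - q̄`,
`p = σ(·)` and `J = diag p - p pᵀ`, so `(J v)ᵢ = pᵢ (vᵢ - E_p v)`. Since `0 ≤ pᵢ ≤ 1`,
`‖J v‖² ≤ ∑ pᵢ (vᵢ - E_p v)² = Var_p v ≤ E_p v² ≤ ‖v‖²`, and the mean value inequality
gives the Lipschitz bound.
-/

open Finset WithLp

section ProbabilityVector

variable {ι : Type*} [Fintype ι]

theorem norm_toLp_two_eq_sqrt_sum_sq (f : ι → ℝ) : ‖toLp 2 f‖ = √(∑ i, f i ^ 2) := by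
  simp [EuclideanSpace.norm_eq]

theorem norm_toLp_mul_sub_sum_mul_le {p : ι → ℝ} (hp : ∀ i, 0 ≤ p i) (hp_sum : ∑ i, p i = 1)
    (v : ι → ℝ) : ‖toLp 2 (fun i => p i * (v i - ∑ j, p j * v j))‖ ≤ ‖toLp 2 v‖ := by
  set m := ∑ j, p j * v j
  have hp_le_one (i : ι) : p i ≤ 1 :=
    hp_sum ▸ single_le_sum (fun j _ => hp j) (mem_univ i)
  have variance_eq : ∑ i, p i * (v i - m) ^ 2 = ∑ i, p i * v i ^ 2 - m ^ 2 := by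
    have expand (i : ι) :
        p i * (v i - m) ^ 2 = p i * v i ^ 2 - 2 * m * (p i * v i) + m ^ 2 * p i := by
      ring
    simp only [expand, sum_add_distrib, sum_sub_distrib, ← mul_sum, hp_sum]
    ring
  rw [norm_toLp_two_eq_sqrt_sum_sq, norm_toLp_two_eq_sqrt_sum_sq]
  refine Real.sqrt_le_sqrt ?_
  calc ∑ i, (p i * (v i - m)) ^ 2 ≤ ∑ i, p i * (v i - m) ^ 2 := by
        gcongr with i
        rw [mul_pow]
        gcongr
        nlinarith [hp i, hp_le_one i]
    _ = ∑ i, p i * v i ^ 2 - m ^ 2 := variance_eq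
    _ ≤ ∑ i, p i * v i ^ 2 := sub_le_self _ (sq_nonneg m)
    _ ≤ ∑ i, v i ^ 2 := by
        gcongr with i
        exact mul_le_of_le_one_left (sq_nonneg _) (hp_le_one i)

end ProbabilityVector

section Softmax

variable {n : ℕ} (τ : ℝ)

theorem softmax_nonneg (q : Fin n → ℝ) (i : Fin n) : 0 ≤ softmax τ q i := by
  unfold softmax; positivity

theorem sum_softmax [NeZero n] (q : Fin n → ℝ) : ∑ i, softmax τ q i = 1 := by
  simp only [softmax, ← sum_div]
  exact div_self (sum_pos (fun j _ => Real.exp_pos _) univ_nonempty).ne'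

theorem hasDerivAt_softmax_add_smul (q v : Fin n → ℝ) (i : Fin n) (t : ℝ) :
    HasDerivAt (fun s => softmax τ (q + s • v) i)
      (τ⁻¹ * (softmax τ (q + t • v) i * (v i - ∑ j, softmax τ (q + t • v) j * v j))) t := by
  set N : Fin n → ℝ → ℝ := fun j s => Real.exp ((q j + s * v j) / τ)
  have hN (j : Fin n) : HasDerivAt (N j) (N j t * (v j / τ)) t := by
    simpa using ((((hasDerivAt_id t).mul_const (v j)).const_add (q j)).div_const τ).exp
  have hS_pos : 0 < ∑ j, N j t := sum_pos (fun j _ => Real.exp_pos _) ⟨i, mem_univ i⟩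
  have hquot : HasDerivAt (fun s => N i s / ∑ j, N j s)
      ((N i t * (v i / τ) * ∑ j, N j t - N i t * ∑ j, N j t * (v j / τ)) / (∑ j, N j t) ^ 2) t :=
    (hN i).div (HasDerivAt.fun_sum fun j _ => hN j) hS_pos.ne'
  have hsoftmax (j : Fin n) : softmax τ (q + t • v) j = N j t / ∑ k, N k t := rfl
  convert hquot using 1
  · simp only [softmax, N, Pi.add_apply, Pi.smul_apply, smul_eq_mul]
  · simp only [hsoftmax, div_mul_eq_mul_div, ← sum_div, mul_div_assoc']
    field_simp

theorem norm_toLp_softmax_sub_le [NeZero n] (hτ : 0 < τ) (q qb : Fin n → ℝ) :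
    ‖toLp 2 (softmax τ q - softmax τ qb)‖ ≤ τ⁻¹ * ‖toLp 2 (q - qb)‖ := by
  set v := q - qb
  let p (s : ℝ) := softmax τ (qb + s • v)
  let γ (s : ℝ) : EuclideanSpace ℝ (Fin n) := toLp 2 (p s)
  have hγ (s : ℝ) : HasDerivAt γ (τ⁻¹ • toLp 2 fun i => p s i * (v i - ∑ j, p s j * v j)) s := by
    have hp : HasDerivAt p (τ⁻¹ • fun i => p s i * (v i - ∑ j, p s j * v j)) s :=
      hasDerivAt_pi.2 fun i => hasDerivAt_softmax_add_smul τ qb v i s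
    exact (PiLp.hasFDerivAt_toLp 2 (p s)).comp_hasDerivAt s hp
  have hbound (s : ℝ) :
      ‖τ⁻¹ • toLp 2 fun i => p s i * (v i - ∑ j, p s j * v j)‖ ≤ τ⁻¹ * ‖toLp 2 v‖ := by
    rw [norm_smul, Real.norm_of_nonneg (inv_nonneg.2 hτ.le)]
    gcongr
    exact norm_toLp_mul_sub_sum_mul_le (softmax_nonneg τ _) (sum_softmax τ _) v
  simpa [γ, p, v] using norm_image_sub_le_of_norm_deriv_le_segment_01' (f := γ)
    (fun s _ => (hγ s).hasDerivWithinAt) fun s _ => hbound s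

end Softmax

/-- The softmax function with temperature τ > 0 is (1/τ)-Lipschitz in the
Euclidean norm: ‖σ(q) - σ(q̄)‖₂ ≤ (1/τ)‖q - q̄‖₂. -/
theorem softmax_lipschitz_euclidean {n : ℕ} (hn : 1 ≤ n) {τ : ℝ} (hτ : 0 < τ)
    (q qb : Fin n → ℝ) :
    Real.sqrt (∑ i, (softmax τ q i - softmax τ qb i) ^ 2)
      ≤ (1 / τ) * Real.sqrt (∑ i, (q i - qb i) ^ 2) := by
  have : NeZero n := ⟨Nat.one_le_iff_ne_zero.1 hn⟩
  simpa only [norm_toLp_two_eq_sqrt_sum_sq, Pi.sub_apply, one_div] using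
    norm_toLp_softmax_sub_le τ hτ q qb
end

section
/- The quantized minimax value error bound: under the assumptions that (i) v_κ is L_κ-Lipschitz w.r.t. ‖·‖₁ with L_κ = L₀Σ_{ℓ=0}^κ(ℓ+1)γ^ℓ, (ii) the minimax operator is non-expansive, (iii) the quantizer Φ satisfies ‖z - Φ(z)‖₁ ≤ Δ, and (iv) the one-step error recursion ‖v_κ - v̂_κ‖_∞ ≤ L_κΔ + γ‖v_{κ-1} - v̂_{κ-1}‖_∞ with ‖v₀ - v̂₀‖_∞ ≤ L₀Δ holds, we have ‖v_κ - v̂_κ‖_∞ ≤ Δ·(√|B|/τ)·max|u|/(1-γ)³ for all κ, where L₀ = (√|B|/τ)·max|u|. -/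
/-!
Bounding every partial sum `∑_{ℓ ≤ κ} (ℓ + 1) γ^ℓ` by the full series `1 / (1 - γ)²` turns the
error recursion into `e_κ ≤ c + γ e_{κ-1}` with the constant `c = L₀Δ / (1 - γ)²`. The fixed point
`c / (1 - γ) = L₀Δ / (1 - γ)³` of `x ↦ c + γ x` is then an invariant upper bound, and it already
dominates `e₀ ≤ L₀Δ`.
-/

open Finset

theorem hasSum_succ_mul_geometric_of_norm_lt_one {𝕜 : Type*} [NormedDivisionRing 𝕜]
    [HasSummableGeomSeries 𝕜] {r : 𝕜} (hr : ‖r‖ < 1) :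
    HasSum (fun n : ℕ ↦ (n + 1 : 𝕜) * r ^ n) (1 / (1 - r) ^ 2) := by
  simpa using hasSum_choose_mul_geometric_of_norm_lt_one 1 hr

theorem sum_range_succ_mul_geometric_le {γ : ℝ} (hγ0 : 0 ≤ γ) (hγ1 : γ < 1) (n : ℕ) :
    ∑ ℓ ∈ range n, (ℓ + 1 : ℝ) * γ ^ ℓ ≤ 1 / (1 - γ) ^ 2 :=
  sum_le_hasSum _ (fun ℓ _ ↦ by positivity) <| hasSum_succ_mul_geometric_of_norm_lt_one <| by
    rwa [Real.norm_of_nonneg hγ0]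

theorem le_div_one_sub_of_le_add_mul {e : ℕ → ℝ} {γ c : ℝ} (hγ0 : 0 ≤ γ) (hγ1 : γ < 1)
    (h0 : e 0 ≤ c / (1 - γ)) (hrec : ∀ k, e (k + 1) ≤ c + γ * e k) (k : ℕ) :
    e k ≤ c / (1 - γ) := by
  induction k with
  | zero => exact h0
  | succ k ih =>
    have hfix : c + γ * (c / (1 - γ)) = c / (1 - γ) := by
      field_simp [(sub_pos.2 hγ1).ne']
      ring
    calc e (k + 1) ≤ c + γ * e k := hrec k
      _ ≤ c + γ * (c / (1 - γ)) := by gcongr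
      _ = c / (1 - γ) := hfix

theorem quantized_value_error_bound_general {γ τ Δ U : ℝ} {cardB : ℕ}
    (hγ0 : 0 < γ) (hγ1 : γ < 1) (e : ℕ → ℝ) (he : ∀ κ, 0 ≤ e κ)
    (L : ℕ → ℝ)
    (hL : ∀ κ, L κ = (Real.sqrt cardB / τ * U) *
        ∑ ℓ ∈ Finset.range (κ + 1), (ℓ + 1 : ℝ) * γ ^ ℓ)
    (h0 : e 0 ≤ (Real.sqrt cardB / τ * U) * Δ)
    (hrec : ∀ κ : ℕ, 1 ≤ κ → e κ ≤ L κ * Δ + γ * e (κ - 1)) :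
    ∀ κ : ℕ, e κ ≤ Δ * Real.sqrt cardB * U / (τ * (1 - γ) ^ 3) := by
  set L₀ := Real.sqrt cardB / τ * U
  have hγ : 0 < 1 - γ := sub_pos.2 hγ1
  have hL₀Δ : 0 ≤ L₀ * Δ := (he 0).trans h0
  have hLΔ (κ : ℕ) : L κ * Δ ≤ L₀ * Δ / (1 - γ) ^ 2 := by
    rw [hL, mul_right_comm, ← mul_one_div]
    exact mul_le_mul_of_nonneg_left (sum_range_succ_mul_geometric_le hγ0.le hγ1 _) hL₀Δ
  have hbase : e 0 ≤ L₀ * Δ / (1 - γ) ^ 2 / (1 - γ) := by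
    rw [div_div, ← pow_succ]
    exact h0.trans (le_div_self hL₀Δ (by positivity) (pow_le_one₀ hγ.le (by linarith)))
  intro κ
  calc e κ ≤ L₀ * Δ / (1 - γ) ^ 2 / (1 - γ) :=
        le_div_one_sub_of_le_add_mul hγ0.le hγ1 hbase
          (fun k ↦ (hrec (k + 1) k.succ_pos).trans (add_le_add_left (hLΔ _) _)) κ
    _ = Δ * Real.sqrt cardB * U / (τ * (1 - γ) ^ 3) := by
      simp only [L₀]
      field_simp

/-- Quantized minimax value error bound: with L₀ = (√|B|/τ)·U,
L_κ = L₀∑_{ℓ=0}^{κ}(ℓ+1)γ^ℓ, and errors e_κ = ‖v_κ - v̂_κ‖_∞ satisfying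
e₀ ≤ L₀Δ and e_κ ≤ L_κΔ + γe_{κ-1}, we get e_κ ≤ Δ√|B|·U/(τ(1-γ)³). -/
theorem quantized_value_error_bound {γ τ Δ U : ℝ} {cardB : ℕ}
    (hγ0 : 0 < γ) (hγ1 : γ < 1) (hτ : 0 < τ) (hΔ : 0 < Δ) (hU : 0 ≤ U)
    (hB : 1 ≤ cardB) (e : ℕ → ℝ) (he : ∀ κ, 0 ≤ e κ)
    (L : ℕ → ℝ)
    (hL : ∀ κ, L κ = (Real.sqrt cardB / τ * U) *
        ∑ ℓ ∈ Finset.range (κ + 1), (ℓ + 1 : ℝ) * γ ^ ℓ)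
    (h0 : e 0 ≤ (Real.sqrt cardB / τ * U) * Δ)
    (hrec : ∀ κ : ℕ, 1 ≤ κ → e κ ≤ L κ * Δ + γ * e (κ - 1)) :
    ∀ κ : ℕ, e κ ≤ Δ * Real.sqrt cardB * U / (τ * (1 - γ) ^ 3) :=
  quantized_value_error_bound_general hγ0 hγ1 e he L hL h0 hrec
end
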